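/- arXiv:1002.0674 — 2 statements merged into one kernel-verified Lean document; each statement's English description precedes it below -/
import Mathlib

section
/- For the fundamental weight ω_i of sl_{n+1}, the set S(ω_i) consists exactly of the 0-1 tuples supported on antichains in R_i: s ∈ S(ω_i) iff s_α ∈ {0,1} for all α, s_α = 0 for α ∉ R_i, and the support of s is an antichain with respect to the order (j,k) ≤ (j',k') iff j ≤ j' and k ≤ k'. Consequently #S(ω_i) = C(n+1, i) = dim V(ω_i). -/
open Finset

/-- `(p,q)` indexes the positive root `α_p + ⋯ + α_q` of type `A_n`. -/
abbrev IsRoot (n p q : ℕ) : Prop := 1 ≤ p ∧ p ≤ q ∧ q ≤ n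

/-- One step in a Dyck path: `α_{p,q} → α_{p,q+1}` or `α_{p,q} → α_{p+1,q}`. -/
abbrev RootStep (a b : ℕ × ℕ) : Prop := b = (a.1, a.2 + 1) ∨ b = (a.1 + 1, a.2)

/-- A Dyck path, recorded as the list of index pairs of its roots.  The first
and last entries are simple roots, and each step follows the recursion rule. -/
def IsDyckPath (n : ℕ) (L : List (ℕ × ℕ)) : Prop :=
  L ≠ [] ∧ (∀ a ∈ L, IsRoot n a.1 a.2) ∧
  (L.head!).1 = (L.head!).2 ∧ (L.getLast!).1 = (L.getLast!).2 ∧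
  L.Chain' RootStep

/-- A multi-exponent: a tuple of nonnegative integers supported on the
positive roots of `A_n`. -/
def IsMultiExp (n : ℕ) (s : ℕ × ℕ → ℕ) : Prop := ∀ p q, ¬ IsRoot n p q → s (p, q) = 0

/-- `s ∈ S(λ)` for `λ = Σ_{i=1}^n m i · ω_i` : for every Dyck path from
`α_i` to `α_j` the sum of the entries of `s` along the path is at most
`m_i + ⋯ + m_j`. -/
def InS (n : ℕ) (m : ℕ → ℕ) (s : ℕ × ℕ → ℕ) : Prop :=
  IsMultiExp n s ∧
  ∀ L : List (ℕ × ℕ), IsDyckPath n L →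
    (L.map s).sum ≤ ∑ t ∈ Finset.Icc (L.head!).1 (L.getLast!).1, m t

/-!
A Dyck path is a strictly increasing chain for the componentwise order on roots. Hence a 0-1 tuple
supported on an antichain of `R_i` meets it in at most one root, and only if the path runs from
some `α_a` with `a ≤ i` to some `α_b` with `b ≥ i`. Conversely, two roots `(p, q) ≤ (p', q')` with
`p' ≤ q` lie on a common Dyck path from `α_p` to `α_{q'}`, which forces the 0-1, support and
antichain conditions on every `s ∈ S(ω_i)`.

An antichain of `[1, i] × [i, n]` is the graph of a decreasing bijection between its two
projections, so it is determined by them, and every pair `A ⊆ [1, i]`, `B ⊆ [i, n]` of equal size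
arises. Vandermonde's identity `∑ₖ C(i, k) C(n + 1 - i, k) = C(n + 1, i)` finishes the count.
-/

namespace List

theorem Pairwise.le_getLast! {α : Type*} [Preorder α] [Inhabited α] {l : List α} {a : α}
    (hl : l.Pairwise (· ≤ ·)) (ha : a ∈ l) : a ≤ l.getLast! := by
  rw [getLast!_eq_getLast?_getD, getLast?_eq_some_getLast (ne_nil_of_mem ha)]
  exact hl.rel_getLast ha

theorem Pairwise.sum_map_le_one {α : Type*} [Preorder α] {l : List α} {f : α → ℕ}
    (hl : l.Pairwise (· < ·)) (hf : ∀ a, f a ≤ 1)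
    (hanti : IsAntichain (· ≤ ·) (Function.support f)) : (l.map f).sum ≤ 1 := by
  induction l with
  | nil => simp
  | cons x l ih =>
    rw [pairwise_cons] at hl
    by_cases hx : f x = 0
    · simpa [hx] using ih hl.2
    · have hzero : ∀ y ∈ l, f y = 0 := fun y hy => by
        by_contra hy0
        exact (hl.1 y hy).ne (hanti.eq hx hy0 (hl.1 y hy).le)
      rw [map_cons, sum_cons, sum_eq_zero_iff.2 (by simpa using hzero), add_zero]
      exact hf x

end List

theorem RootStep.lt {a b : ℕ × ℕ} (h : RootStep a b) : a < b := by
  rcases h with rfl | rfl <;> simp [Prod.lt_iff]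

theorem IsDyckPath.pairwise_lt {n : ℕ} {L : List (ℕ × ℕ)} (hL : IsDyckPath n L) :
    L.Pairwise (· < ·) :=
  (List.IsChain.imp (fun _ _ => RootStep.lt) hL.2.2.2.2).pairwise

theorem IsDyckPath.sum_map_eq_sum_toFinset {n : ℕ} {L : List (ℕ × ℕ)} (hL : IsDyckPath n L)
    (s : ℕ × ℕ → ℕ) : (L.map s).sum = ∑ a ∈ L.toFinset, s a :=
  (List.sum_toFinset s hL.pairwise_lt.nodup).symm

/-- The point with coordinate sum `c` on the path `(p,p) → (p,q) → (p',q) → (p',q') → (q',q')`. -/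
def hookPoint (p q p' q' c : ℕ) : ℕ × ℕ :=
  if c ≤ p + q then (p, c - p)
  else if c ≤ p' + q then (c - q, q)
  else if c ≤ p' + q' then (p', c - p')
  else (c - q', q')

theorem exists_isDyckPath_mem_mem {n p q p' q' : ℕ} (hp : 1 ≤ p) (hpp' : p ≤ p')
    (hp'q : p' ≤ q) (hqq' : q ≤ q') (hq' : q' ≤ n) :
    ∃ L, IsDyckPath n L ∧ L.head!.1 = p ∧ L.getLast!.1 = q' ∧ (p, q) ∈ L ∧ (p', q') ∈ L := by
  obtain ⟨hstart, hend, hpq, hpq'⟩ : hookPoint p q p' q' (2 * p) = (p, p) ∧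
      hookPoint p q p' q' (2 * q') = (q', q') ∧ hookPoint p q p' q' (p + q) = (p, q) ∧
      hookPoint p q p' q' (p' + q') = (p', q') := by
    refine ⟨?_, ?_, ?_, ?_⟩ <;> unfold hookPoint <;> split_ifs <;>
      simp only [Prod.mk.injEq, true_and, and_true] <;> omega
  let L := (List.range (2 * (q' - p) + 1)).map fun t => hookPoint p q p' q' (2 * p + t)
  have hmem : ∀ c, 2 * p ≤ c → c ≤ 2 * q' → hookPoint p q p' q' c ∈ L := fun c h1 h2 =>
    List.mem_map.2 ⟨c - 2 * p, List.mem_range.2 (by omega), by rw [Nat.add_sub_cancel' h1]⟩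
  have hhead : L.head! = (p, p) := by
    simp [L, List.head!_eq_head?_getD, List.head?_range, hstart]
  have hlast : L.getLast! = (q', q') := by
    have h : 2 * p + 2 * (q' - p) = 2 * q' := by omega
    simp [L, List.getLast!_eq_getLast?_getD, List.getLast?_range, h, hend]
  refine ⟨L, ⟨by simp [L], ?_, by rw [hhead], by rw [hlast], ?_⟩, by rw [hhead], by rw [hlast],
    hpq ▸ hmem _ (by omega) (by omega), hpq' ▸ hmem _ (by omega) (by omega)⟩
  · simp only [L, List.mem_map, List.mem_range]
    rintro _ ⟨t, ht, rfl⟩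
    unfold hookPoint
    split_ifs <;> dsimp only <;> omega
  · show L.IsChain RootStep
    rw [List.isChain_map, List.isChain_range_succ]
    intro t ht
    unfold hookPoint RootStep
    split_ifs <;> simp only [Prod.mk.injEq, true_and, and_true] <;> omega

theorem InS.sum_pair_le {n : ℕ} {m : ℕ → ℕ} {s : ℕ × ℕ → ℕ} (hs : InS n m s) {p q p' q' : ℕ}
    (hp : 1 ≤ p) (hpp' : p ≤ p') (hp'q : p' ≤ q) (hqq' : q ≤ q') (hq' : q' ≤ n) :
    ∑ a ∈ {(p, q), (p', q')}, s a ≤ ∑ t ∈ Icc p q', m t := by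
  obtain ⟨L, hL, hhead, hlast, hmem, hmem'⟩ := exists_isDyckPath_mem_mem hp hpp' hp'q hqq' hq'
  calc ∑ a ∈ {(p, q), (p', q')}, s a ≤ ∑ a ∈ L.toFinset, s a :=
        sum_le_sum_of_subset (by simp [insert_subset_iff, hmem, hmem'])
    _ = (L.map s).sum := (hL.sum_map_eq_sum_toFinset s).symm
    _ ≤ ∑ t ∈ Icc p q', m t := hhead ▸ hlast ▸ hs.2 L hL

theorem InS.apply_le {n : ℕ} {m : ℕ → ℕ} {s : ℕ × ℕ → ℕ} (hs : InS n m s) {p q : ℕ}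
    (h : IsRoot n p q) : s (p, q) ≤ ∑ t ∈ Icc p q, m t := by
  simpa using hs.sum_pair_le h.1 le_rfl h.2.1 le_rfl h.2.2

theorem sum_Icc_ite_eq (a b i : ℕ) :
    ∑ t ∈ Icc a b, (if t = i then 1 else 0) = if a ≤ i ∧ i ≤ b then 1 else 0 := by
  simp [sum_ite_eq']

/-- `R_i`, the set of positive roots `α` with `(ω_i, α) = 1`. -/
def rootsR (n i : ℕ) : Finset (ℕ × ℕ) := Icc 1 i ×ˢ Icc i n

theorem mem_rootsR {n i p q : ℕ} : (p, q) ∈ rootsR n i ↔ IsRoot n p q ∧ p ≤ i ∧ i ≤ q := by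
  simp only [rootsR, mem_product, mem_Icc]
  omega

theorem InS.le_ite_mem_rootsR {n i : ℕ} {s : ℕ × ℕ → ℕ}
    (hs : InS n (fun t => if t = i then 1 else 0) s) (a : ℕ × ℕ) :
    s a ≤ if a ∈ rootsR n i then 1 else 0 := by
  obtain ⟨p, q⟩ := a
  by_cases h : IsRoot n p q
  · simpa only [mem_rootsR, and_iff_right h, sum_Icc_ite_eq] using hs.apply_le h
  · simp [hs.1 p q h]

theorem inS_fundamental_of_isAntichain {n i : ℕ} {s : ℕ × ℕ → ℕ}
    (hsupp : ∀ a ∉ rootsR n i, s a = 0) (hle : ∀ a, s a ≤ 1)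
    (hanti : IsAntichain (· ≤ ·) (Function.support s)) :
    InS n (fun t => if t = i then 1 else 0) s := by
  refine ⟨fun p q h => hsupp _ fun h' => h (mem_rootsR.1 h').1, fun L hL => ?_⟩
  rw [sum_Icc_ite_eq]
  split_ifs with hc
  · exact hL.pairwise_lt.sum_map_le_one hle hanti
  refine (List.sum_eq_zero_iff.2 ?_).le
  simp only [List.mem_map]
  rintro _ ⟨⟨p, q⟩, haL, rfl⟩
  by_contra ha
  have hpq := mem_rootsR.1 (not_imp_comm.1 (hsupp _) ha)
  have hmono := hL.pairwise_lt.imp le_of_lt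
  obtain ⟨hhead, -⟩ := hmono.head!_le haL
  obtain ⟨-, hlast⟩ := hmono.le_getLast! haL
  have := hL.2.2.2.1
  dsimp only at hhead hlast
  exact hc ⟨by omega, by omega⟩

theorem inS_fundamental_iff {n i : ℕ} {s : ℕ × ℕ → ℕ} :
    InS n (fun t => if t = i then 1 else 0) s ↔
      (∀ a ∉ rootsR n i, s a = 0) ∧ (∀ a, s a ≤ 1) ∧
        IsAntichain (· ≤ ·) (Function.support s) := by
  refine ⟨fun hs => ?_, fun ⟨hsupp, hle, hanti⟩ => inS_fundamental_of_isAntichain hsupp hle hanti⟩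
  have hsupp : ∀ a, s a ≠ 0 → a ∈ rootsR n i := fun a ha => by
    by_contra h
    simpa [h, ha] using hs.le_ite_mem_rootsR a
  refine ⟨fun a ha => by simpa [ha] using hs.le_ite_mem_rootsR a,
    fun a => (hs.le_ite_mem_rootsR a).trans (by split_ifs <;> omega), ?_⟩
  rintro ⟨p, q⟩ hx ⟨p', q'⟩ hy hne ⟨hpp', hqq'⟩
  have hx' := mem_rootsR.1 (hsupp _ hx)
  have hy' := mem_rootsR.1 (hsupp _ hy)
  have hsum := hs.sum_pair_le hx'.1.1 hpp' (by omega) hqq' hy'.1.2.2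
  rw [sum_pair hne, sum_Icc_ite_eq] at hsum
  rw [Function.mem_support] at hx hy
  split_ifs at hsum <;> omega

theorem isAntichain_support_iff {α β M : Type*} [Preorder α] [Preorder β] [Zero M]
    {s : α × β → M} :
    IsAntichain (· ≤ ·) (Function.support s) ↔
      ∀ p q p' q', s (p, q) ≠ 0 → s (p', q') ≠ 0 → p ≤ p' → q ≤ q' → (p, q) = (p', q') :=
  ⟨fun h _ _ _ _ hx hy hp hq => h.eq hx hy ⟨hp, hq⟩,
    fun h _ hx _ hy hne hxy => hne (h _ _ _ _ hx hy hxy.1 hxy.2)⟩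

theorem mem_image_indicator_iff {α : Type*} [Preorder α] {R : Finset α} {s : α → ℕ} :
    s ∈ (fun T : Finset α => (T : Set α).indicator 1) ''
        {T | T ⊆ R ∧ IsAntichain (· ≤ ·) (T : Set α)} ↔
      (∀ a ∉ R, s a = 0) ∧ (∀ a, s a ≤ 1) ∧ IsAntichain (· ≤ ·) (Function.support s) := by
  classical
  constructor
  · rintro ⟨T, ⟨hTR, hT⟩, rfl⟩
    refine ⟨fun a ha => Set.indicator_of_notMem (fun h => ha (hTR h)) _, fun a => ?_, ?_⟩
    · by_cases h : a ∈ (T : Set α) <;> simp [h]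
    · rwa [Set.support_indicator, Function.support_one, Set.inter_univ]
  · rintro ⟨hR, hle, hanti⟩
    refine ⟨{a ∈ R | s a ≠ 0}, ⟨filter_subset _ _, hanti.subset fun a ha => (mem_filter.1 ha).2⟩,
      funext fun a => ?_⟩
    dsimp only
    by_cases ha : s a = 0
    · rw [Set.indicator_of_notMem (by simp [ha]), ha]
    · have haR : a ∈ R := not_imp_comm.1 (hR a) ha
      rw [Set.indicator_of_mem (by simp [ha, haR]), Pi.one_apply]
      have := hle a
      omega

section Antichain

variable {α β : Type*} [LinearOrder α] [LinearOrder β]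

theorem Finset.strictAntiOn_card_filter_le (B : Finset β) :
    StrictAntiOn (fun b => #{c ∈ B | b ≤ c}) B := by
  intro b hb b' _ hbb'
  refine card_lt_card ⟨fun c hc => ?_, fun hsub => ?_⟩
  · rw [mem_filter] at hc ⊢
    exact ⟨hc.1, hbb'.le.trans hc.2⟩
  · exact (mem_filter.1 (hsub (mem_filter.2 ⟨hb, le_rfl⟩))).2.not_gt hbb'

namespace IsAntichain

variable {T T' : Finset (α × β)}

theorem injOn_fst (hT : IsAntichain (· ≤ ·) (T : Set (α × β))) :
    Set.InjOn Prod.fst (T : Set (α × β)) := by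
  intro a ha b hb hab
  rcases le_total a.2 b.2 with h | h
  · exact hT.eq ha hb ⟨hab.le, h⟩
  · exact hT.eq' ha hb ⟨hab.ge, h⟩

theorem injOn_snd (hT : IsAntichain (· ≤ ·) (T : Set (α × β))) :
    Set.InjOn Prod.snd (T : Set (α × β)) := by
  intro a ha b hb hab
  rcases le_total a.1 b.1 with h | h
  · exact hT.eq ha hb ⟨h, hab.le⟩
  · exact hT.eq' ha hb ⟨h, hab.ge⟩

theorem card_image_fst (hT : IsAntichain (· ≤ ·) (T : Set (α × β))) :
    #(T.image Prod.fst) = #T :=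
  card_image_of_injOn hT.injOn_fst

theorem card_image_snd (hT : IsAntichain (· ≤ ·) (T : Set (α × β))) :
    #(T.image Prod.snd) = #T :=
  card_image_of_injOn hT.injOn_snd

/-- In an antichain `y.1 ≤ x.1 ↔ x.2 ≤ y.2`, so the rank of `x.1` among the first coordinates is
the corank of `x.2` among the second ones. -/
theorem card_filter_image_fst_le (hT : IsAntichain (· ≤ ·) (T : Set (α × β))) {x : α × β}
    (hx : x ∈ T) :
    #{a ∈ T.image Prod.fst | a ≤ x.1} = #{b ∈ T.image Prod.snd | x.2 ≤ b} := by
  rw [filter_image, filter_image,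
    card_image_of_injOn (hT.injOn_fst.mono (coe_subset.2 (filter_subset _ _))),
    card_image_of_injOn (hT.injOn_snd.mono (coe_subset.2 (filter_subset _ _)))]
  congr 1
  refine filter_congr fun y hy => ⟨fun h => ?_, fun h => ?_⟩
  · by_contra! hlt
    exact hlt.ne (congrArg Prod.snd (hT.eq hy hx ⟨h, hlt.le⟩))
  · by_contra! hlt
    exact hlt.ne (congrArg Prod.fst (hT.eq hx hy ⟨hlt.le, h⟩))

theorem subset_of_image_eq (hT : IsAntichain (· ≤ ·) (T : Set (α × β)))
    (hT' : IsAntichain (· ≤ ·) (T' : Set (α × β))) (hfst : T.image Prod.fst = T'.image Prod.fst)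
    (hsnd : T.image Prod.snd = T'.image Prod.snd) : T ⊆ T' := by
  intro x hx
  obtain ⟨y, hy, hyx⟩ := mem_image.1 (hfst ▸ mem_image_of_mem Prod.fst hx)
  have hrank := hT.card_filter_image_fst_le hx
  rw [hfst, hsnd, ← hyx, hT'.card_filter_image_fst_le hy] at hrank
  have hyx' : y.2 = x.2 := (T'.image Prod.snd).strictAntiOn_card_filter_le.injOn
    (mem_image_of_mem _ hy) (hsnd ▸ mem_image_of_mem _ hx) hrank
  rwa [← Prod.ext hyx hyx']

theorem eq_of_image_eq (hT : IsAntichain (· ≤ ·) (T : Set (α × β)))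
    (hT' : IsAntichain (· ≤ ·) (T' : Set (α × β))) (hfst : T.image Prod.fst = T'.image Prod.fst)
    (hsnd : T.image Prod.snd = T'.image Prod.snd) : T = T' :=
  (hT.subset_of_image_eq hT' hfst hsnd).antisymm (hT'.subset_of_image_eq hT hfst.symm hsnd.symm)

end IsAntichain

def staircase (A : Finset α) (B : Finset β) (h : #B = #A) : Finset (α × β) :=
  univ.image fun j : Fin #A => (A.orderEmbOfFin rfl j, B.orderEmbOfFin h j.rev)

section Staircase

variable {A : Finset α} {B : Finset β} (h : #B = #A)

theorem image_fst_staircase : (staircase A B h).image Prod.fst = A := by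
  rw [staircase, image_image]
  exact image_orderEmbOfFin_univ A rfl

theorem image_snd_staircase : (staircase A B h).image Prod.snd = B := by
  apply coe_injective
  rw [staircase, image_image, coe_image, coe_univ, Set.image_univ, ← B.range_orderEmbOfFin h]
  exact Fin.rev_surjective.range_comp (B.orderEmbOfFin h)

theorem staircase_subset_product : staircase A B h ⊆ A ×ˢ B := fun _ hx =>
  mem_product.2 ⟨image_fst_staircase h ▸ mem_image_of_mem _ hx,
    image_snd_staircase h ▸ mem_image_of_mem _ hx⟩

theorem isAntichain_staircase : IsAntichain (· ≤ ·) (staircase A B h : Set (α × β)) := by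
  simp only [staircase, coe_image, coe_univ, Set.image_univ]
  rintro _ ⟨j, rfl⟩ _ ⟨j', rfl⟩ hne ⟨h1, h2⟩
  have hjj' : j ≤ j' := (A.orderEmbOfFin rfl).le_iff_le.1 h1
  have hj'j : j' ≤ j := Fin.rev_le_rev.1 ((B.orderEmbOfFin h).le_iff_le.1 h2)
  exact hne (by rw [le_antisymm hjj' hj'j])

end Staircase

theorem ncard_isAntichain_subset_product (X : Finset α) (Y : Finset β) :
    {T : Finset (α × β) | T ⊆ X ×ˢ Y ∧ IsAntichain (· ≤ ·) (T : Set (α × β))}.ncard =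
      #{AB ∈ X.powerset ×ˢ Y.powerset | #AB.1 = #AB.2} := by
  rw [← Set.ncard_coe_finset]
  refine Set.BijOn.ncard_eq (f := fun T => (T.image Prod.fst, T.image Prod.snd)) ⟨?_, ?_, ?_⟩
  · rintro T ⟨hTXY, hT⟩
    simp only [coe_filter, mem_product, mem_powerset, Set.mem_ofPred_eq, image_subset_iff,
      hT.card_image_fst, hT.card_image_snd, and_true]
    exact ⟨fun x hx => (mem_product.1 (hTXY hx)).1, fun x hx => (mem_product.1 (hTXY hx)).2⟩
  · rintro T ⟨-, hT⟩ T' ⟨-, hT'⟩ h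
    exact hT.eq_of_image_eq hT' (congrArg Prod.fst h) (congrArg Prod.snd h)
  · rintro ⟨A, B⟩ hAB
    simp only [coe_filter, mem_product, mem_powerset, Set.mem_ofPred_eq] at hAB
    obtain ⟨⟨hA, hB⟩, hcard⟩ := hAB
    refine ⟨staircase A B hcard.symm, ⟨?_, isAntichain_staircase hcard.symm⟩, ?_⟩
    · exact (staircase_subset_product _).trans (product_subset_product hA hB)
    · simp only [image_fst_staircase, image_snd_staircase]

end Antichain

theorem Nat.sum_range_choose_mul_choose_eq (x y : ℕ) :
    ∑ k ∈ range (x + 1), x.choose k * y.choose k = (x + y).choose x := by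
  rw [Nat.add_choose_eq, ← Nat.sum_antidiagonal_swap]
  simp only [Prod.fst_swap, Prod.snd_swap]
  rw [Nat.sum_antidiagonal_eq_sum_range_succ fun a b => x.choose b * y.choose a]
  refine sum_congr rfl fun k hk => ?_
  rw [Nat.choose_symm (Nat.lt_succ_iff.1 (mem_range.1 hk))]

theorem card_powerset_product_filter_card_eq {α β : Type*} (X : Finset α) (Y : Finset β) :
    #{AB ∈ X.powerset ×ˢ Y.powerset | #AB.1 = #AB.2} = (#X + #Y).choose #X := by
  rw [card_eq_sum_card_fiberwise (f := fun AB => #AB.1) (t := range (#X + 1))]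
  · rw [← Nat.sum_range_choose_mul_choose_eq]
    refine sum_congr rfl fun k _ => ?_
    rw [← card_powersetCard, ← card_powersetCard, ← card_product]
    congr 1
    ext ⟨A, B⟩
    simp only [mem_filter, mem_product, mem_powerset, mem_powersetCard]
    grind
  · intro AB hAB
    simp only [coe_filter, mem_product, mem_powerset, Set.mem_ofPred_eq] at hAB
    exact mem_range.2 (Nat.lt_succ_of_le (card_le_card hAB.1.1))

theorem InS_fundamental_characterization_general (n i : ℕ) (hin : i ≤ n) :
    (∀ s : ℕ × ℕ → ℕ,
      InS n (fun t => if t = i then 1 else 0) s ↔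
        ((∀ p q : ℕ, ¬(IsRoot n p q ∧ p ≤ i ∧ i ≤ q) → s (p, q) = 0) ∧
         (∀ a : ℕ × ℕ, s a ≤ 1) ∧
         (∀ p q p' q' : ℕ, s (p, q) ≠ 0 → s (p', q') ≠ 0 →
            p ≤ p' → q ≤ q' → (p, q) = (p', q')))) ∧
    {s : ℕ × ℕ → ℕ | InS n (fun t => if t = i then 1 else 0) s}.ncard
      = Nat.choose (n + 1) i := by
  refine ⟨fun s => ?_, ?_⟩
  · rw [inS_fundamental_iff, isAntichain_support_iff]
    simp only [Prod.forall, mem_rootsR]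
  have hS : {s | InS n (fun t => if t = i then 1 else 0) s} =
      (fun T : Finset (ℕ × ℕ) => (T : Set (ℕ × ℕ)).indicator 1) ''
        {T | T ⊆ rootsR n i ∧ IsAntichain (· ≤ ·) (T : Set (ℕ × ℕ))} :=
    Set.ext fun s => inS_fundamental_iff.trans mem_image_indicator_iff.symm
  rw [hS, Set.ncard_image_of_injective _ fun T T' h => coe_injective (Set.indicator_one_inj ℕ h),
    rootsR, ncard_isAntichain_subset_product, card_powerset_product_filter_card_eq, Nat.card_Icc,
    Nat.card_Icc, Nat.add_sub_cancel]
  congr 1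
  omega

/-- `S(ω_i)` consists exactly of the 0-1 tuples supported on
antichains in `R_i = {α_{j,k} : j ≤ i ≤ k}` (antichain with respect to the
componentwise order), and `#S(ω_i) = C(n+1, i) = dim V(ω_i)`. -/
theorem InS_fundamental_characterization (n i : ℕ) (hi : 1 ≤ i) (hin : i ≤ n) :
    (∀ s : ℕ × ℕ → ℕ,
      InS n (fun t => if t = i then 1 else 0) s ↔
        ((∀ p q : ℕ, ¬(IsRoot n p q ∧ p ≤ i ∧ i ≤ q) → s (p, q) = 0) ∧
         (∀ a : ℕ × ℕ, s a ≤ 1) ∧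
         (∀ p q p' q' : ℕ, s (p, q) ≠ 0 → s (p', q') ≠ 0 →
            p ≤ p' → q ≤ q' → (p, q) = (p', q')))) ∧
    {s : ℕ × ℕ → ℕ | InS n (fun t => if t = i then 1 else 0) s}.ncard
      = Nat.choose (n + 1) i :=
  InS_fundamental_characterization_general n i hin
end

section
/- Splitting off the minimal set: let λ = Σ_j m_j ω_j with m_i > 0 and i minimal such that m_i ≠ 0. For s ∈ S(λ), let m_i^s be the 0-1 tuple supported on the minimal set M_i^s. Then m_i^s ∈ S(ω_i) and s - m_i^s ∈ S(λ - ω_i). -/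
open Finset

/-- `R_i^s`: the indices `(j,k)` of roots in `R_i = {α_{j,k} : j ≤ i ≤ k}` with
`s_{j,k} ≠ 0`. -/
def RiSupp (n i : ℕ) (s : ℕ × ℕ → ℕ) : Set (ℕ × ℕ) :=
  {a | IsRoot n a.1 a.2 ∧ a.1 ≤ i ∧ i ≤ a.2 ∧ s a ≠ 0}

/-- `M_i^s`: the set of minimal elements of `R_i^s` with respect to the
componentwise order `(j,k) ≤ (j',k') ↔ j ≤ j' ∧ k ≤ k'`. -/
def MinSet (n i : ℕ) (s : ℕ × ℕ → ℕ) : Set (ℕ × ℕ) :=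
  {a ∈ RiSupp n i s | ∀ b ∈ RiSupp n i s, b.1 ≤ a.1 → b.2 ≤ a.2 → b = a}

def IsRootPath (n : ℕ) (x y : ℕ × ℕ) (L : List (ℕ × ℕ)) : Prop :=
  L.head? = some x ∧ L.getLast? = some y ∧ (∀ a ∈ L, IsRoot n a.1 a.2) ∧ L.IsChain RootStep

theorem isRootPath_singleton {n : ℕ} {x : ℕ × ℕ} (hx : IsRoot n x.1 x.2) :
    IsRootPath n x x [x] :=
  ⟨rfl, rfl, by simpa using hx, List.isChain_singleton x⟩

namespace IsRootPath

variable {n : ℕ} {x y z w : ℕ × ℕ} {L M : List (ℕ × ℕ)}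

theorem ne_nil (h : IsRootPath n x y L) : L ≠ [] := by
  rintro rfl
  simp [IsRootPath] at h

theorem isRoot_of_mem (h : IsRootPath n x y L) (hz : z ∈ L) : IsRoot n z.1 z.2 :=
  h.2.2.1 z hz

theorem isRoot_left (h : IsRootPath n x y L) : IsRoot n x.1 x.2 :=
  h.isRoot_of_mem (List.mem_of_head? h.1)

theorem isRoot_right (h : IsRootPath n x y L) : IsRoot n y.1 y.2 :=
  h.isRoot_of_mem (List.mem_of_getLast? h.2.1)

theorem pairwise_lt (h : IsRootPath n x y L) : L.Pairwise (· < ·) :=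
  List.isChain_iff_pairwise.mp (h.2.2.2.imp fun _ _ => RootStep.lt)

theorem left_le (h : IsRootPath n x y L) (hz : z ∈ L) : x ≤ z := by
  obtain ⟨T, rfl⟩ := List.head?_eq_some_iff.mp h.1
  rcases List.mem_cons.mp hz with rfl | hz
  · exact le_rfl
  · exact (List.rel_of_pairwise_cons h.pairwise_lt hz).le

theorem le_right (h : IsRootPath n x y L) (hz : z ∈ L) : z ≤ y := by
  have hlt := h.pairwise_lt
  obtain ⟨T, rfl⟩ := List.getLast?_eq_some_iff.mp h.2.1
  rcases List.mem_append.mp hz with hz | hz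
  · exact ((List.pairwise_append.mp hlt).2.2 z hz y (List.mem_singleton_self y)).le
  · exact (List.mem_singleton.mp hz).le

theorem cons (hw : IsRoot n w.1 w.2) (hwx : RootStep w x) (h : IsRootPath n x y L) :
    IsRootPath n w y (w :: L) := by
  obtain ⟨T, rfl⟩ := List.head?_eq_some_iff.mp h.1
  refine ⟨rfl, ?_, ?_, List.isChain_cons_cons.mpr ⟨hwx, h.2.2.2⟩⟩
  · rw [List.getLast?_cons_cons]; exact h.2.1
  · rintro a (_ | ⟨_, ha⟩)
    exacts [hw, h.isRoot_of_mem ha]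

theorem append (hL : IsRootPath n x y L) (hM : IsRootPath n y z M) :
    IsRootPath n x z (L ++ M.tail) := by
  obtain ⟨T, rfl⟩ := List.head?_eq_some_iff.mp hM.1
  refine ⟨by rw [List.head?_append_of_ne_nil _ hL.ne_nil]; exact hL.1, ?_, ?_, ?_⟩
  · rcases T with _ | ⟨c, T⟩
    · simpa [hL.2.1] using hM.2.1
    · show (L ++ c :: T).getLast? = some z
      rw [List.getLast?_append_of_ne_nil _ (List.cons_ne_nil c T), ← List.getLast?_cons_cons]
      exact hM.2.1
  · intro a ha
    rcases List.mem_append.mp ha with ha | ha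
    exacts [hL.isRoot_of_mem ha, hM.isRoot_of_mem (List.mem_cons_of_mem y ha)]
  · refine List.isChain_append.mpr ⟨hL.2.2.2, (List.isChain_cons.mp hM.2.2.2).2, ?_⟩
    rw [hL.2.1]
    rintro _ ⟨⟩
    exact (List.isChain_cons.mp hM.2.2.2).1

theorem of_append_cons {A B : List (ℕ × ℕ)} (h : IsRootPath n x z (A ++ y :: B)) :
    IsRootPath n y z (y :: B) := by
  refine ⟨rfl, ?_, fun a ha => h.isRoot_of_mem (List.mem_append_right A ha),
    (List.isChain_append.mp h.2.2.2).2.1⟩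
  rw [← List.getLast?_append_of_ne_nil A (List.cons_ne_nil y B)]
  exact h.2.1

end IsRootPath

theorem exists_isRootPath {n : ℕ} {x y : ℕ × ℕ} (hx : IsRoot n x.1 x.2) (hy : IsRoot n y.1 y.2)
    (hxy : x ≤ y) : ∃ L, IsRootPath n x y L := by
  obtain ⟨hxy1, hxy2⟩ := hxy
  by_cases hx2 : x.2 < y.2
  · obtain ⟨L, hL⟩ := exists_isRootPath (x := (x.1, x.2 + 1)) (by dsimp; omega) hy ⟨hxy1, hx2⟩
    exact ⟨_, hL.cons hx (Or.inl rfl)⟩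
  by_cases hx1 : x.1 < y.1
  · obtain ⟨L, hL⟩ := exists_isRootPath (x := (x.1 + 1, x.2)) (by dsimp; omega) hy ⟨hx1, hxy2⟩
    exact ⟨_, hL.cons hx (Or.inr rfl)⟩
  obtain rfl : x = y := Prod.ext (by omega) (by omega)
  exact ⟨_, isRootPath_singleton hx⟩
termination_by (y.1 - x.1) + (y.2 - x.2)

theorem isDyckPath_iff_isRootPath {n : ℕ} {L : List (ℕ × ℕ)} :
    IsDyckPath n L ↔ ∃ a b, IsRootPath n (a, a) (b, b) L := by
  constructor
  · rintro ⟨hne, hroot, hhead, hlast, hchain⟩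
    refine ⟨L.head!.1, L.getLast!.1, ?_, ?_, hroot, hchain⟩
    · obtain ⟨c, T, rfl⟩ := List.exists_cons_of_ne_nil hne
      exact congrArg some (Prod.ext rfl hhead.symm)
    · have hc := List.getLast?_eq_some_getLast hne
      rw [List.getLast!_of_getLast? hc] at hlast ⊢
      exact hc.trans (congrArg some (Prod.ext rfl hlast.symm))
  · rintro ⟨a, b, hL⟩
    rw [IsDyckPath, List.head!_of_head? hL.1, List.getLast!_of_getLast? hL.2.1]
    exact ⟨hL.ne_nil, hL.2.2.1, rfl, rfl, hL.2.2.2⟩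

theorem inS_iff {n : ℕ} {m : ℕ → ℕ} {s : ℕ × ℕ → ℕ} :
    InS n m s ↔ IsMultiExp n s ∧
      ∀ a b L, IsRootPath n (a, a) (b, b) L → (L.map s).sum ≤ ∑ l ∈ Icc a b, m l := by
  refine and_congr_right fun _ => ⟨fun h a b L hL => ?_, fun h L hL => ?_⟩
  · have := h L (isDyckPath_iff_isRootPath.mpr ⟨a, b, hL⟩)
    rwa [List.head!_of_head? hL.1, List.getLast!_of_getLast? hL.2.1] at this
  · obtain ⟨a, b, hL⟩ := isDyckPath_iff_isRootPath.mp hL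
    rw [List.head!_of_head? hL.1, List.getLast!_of_getLast? hL.2.1]
    exact h a b L hL

namespace InS

variable {n : ℕ} {m : ℕ → ℕ} {s : ℕ × ℕ → ℕ} {x y z : ℕ × ℕ} {L : List (ℕ × ℕ)}

theorem sum_le (hs : InS n m s) (hL : IsRootPath n x y L) :
    (L.map s).sum ≤ ∑ l ∈ Icc x.1 y.2, m l := by
  have hx := hL.isRoot_left
  have hy := hL.isRoot_right
  obtain ⟨P, hP⟩ := exists_isRootPath (x := (x.1, x.1)) (by dsimp; omega) hx ⟨le_rfl, hx.2.1⟩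
  obtain ⟨Q, hQ⟩ := exists_isRootPath (y := (y.2, y.2)) hy (by dsimp; omega) ⟨hy.2.1, le_rfl⟩
  refine le_trans ?_ ((inS_iff.mp hs).2 _ _ _ ((hP.append hL).append hQ))
  obtain ⟨T, rfl⟩ := List.head?_eq_some_iff.mp hL.1
  have hxP : s x ≤ (P.map s).sum :=
    List.single_le_sum (by simp) _ (List.mem_map_of_mem (List.mem_of_getLast? hP.2.1))
  simp only [List.tail_cons, List.map_append, List.map_cons, List.sum_append, List.sum_cons]
  omega

theorem add_sum_le (hs : InS n m s) (hx : IsRoot n x.1 x.2) (hxy : x < y)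
    (hM : IsRootPath n y z L) : s x + (L.map s).sum ≤ ∑ l ∈ Icc x.1 z.2, m l := by
  obtain ⟨P, hP⟩ := exists_isRootPath hx hM.isRoot_left hxy.le
  refine le_trans ?_ (hs.sum_le (hP.append hM))
  obtain ⟨T, rfl⟩ := List.head?_eq_some_iff.mp hP.1
  obtain ⟨U, rfl⟩ := List.head?_eq_some_iff.mp hM.1
  have hyT : y ∈ T :=
    (List.mem_cons.mp (List.mem_of_getLast? hP.2.1)).resolve_left hxy.ne'
  have : s y ≤ (T.map s).sum := List.single_le_sum (by simp) _ (List.mem_map_of_mem hyT)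
  simp only [List.tail_cons, List.map_append, List.map_cons, List.sum_append, List.sum_cons]
  omega

theorem apply_eq_zero_of_lt {i p q : ℕ} (hs : InS n m s) (hmin : ∀ l < i, m l = 0)
    (hq : q < i) : s (p, q) = 0 := by
  by_cases hpq : IsRoot n p q
  · have h := hs.sum_le (isRootPath_singleton (x := (p, q)) hpq)
    rw [Finset.sum_eq_zero fun l hl => hmin l (by simp at hl; omega)] at h
    simpa using h
  · exact hs.1 p q hpq

end InS

section MinSet

variable {n i : ℕ} {s : ℕ × ℕ → ℕ} {a : ℕ × ℕ}

theorem mem_minSet_iff : a ∈ MinSet n i s ↔ Minimal (· ∈ RiSupp n i s) a := by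
  rw [minimal_iff]
  refine and_congr_right fun _ => forall₂_congr fun b _ => ?_
  rw [Prod.le_def, eq_comm, and_imp]

theorem isAntichain_minSet : IsAntichain (· ≤ ·) (MinSet n i s) := by
  have : MinSet n i s = {a | Minimal (· ∈ RiSupp n i s) a} := Set.ext fun _ => mem_minSet_iff
  rw [this]
  exact setOfPred_minimal_antichain _

theorem exists_mem_minSet_lt (ha : a ∈ RiSupp n i s) (hna : a ∉ MinSet n i s) :
    ∃ b ∈ MinSet n i s, b < a := by
  obtain ⟨b, hba, hb⟩ := exists_minimal_le_of_wellFoundedLT _ a ha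
  refine ⟨b, mem_minSet_iff.mpr hb, hba.lt_of_ne ?_⟩
  rintro rfl
  exact hna (mem_minSet_iff.mpr hb)

end MinSet

theorem List.sum_map_le_one_of_isAntichain {α : Type*} [Preorder α] {L : List α} {A : Set α}
    {f : α → ℕ} (hL : L.Pairwise (· < ·)) (hA : IsAntichain (· ≤ ·) A) (hf : ∀ x, f x ≤ 1)
    (hfA : ∀ x ∉ A, f x = 0) : (L.map f).sum ≤ 1 := by
  induction L with
  | nil => simp
  | cons x L ih =>
    obtain ⟨hxL, hL⟩ := List.pairwise_cons.mp hL
    rw [List.map_cons, List.sum_cons]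
    by_cases hx : x ∈ A
    · have hzero : (L.map f).sum = 0 := List.sum_eq_zero <| by
        simp only [List.mem_map]
        rintro _ ⟨y, hy, rfl⟩
        exact hfA y fun hyA => hA hx hyA (hxL y hy).ne (hxL y hy).le
      linarith [hf x]
    · rw [hfA x hx, zero_add]
      exact ih hL

theorem sum_Icc_eq_of_forall_lt {m : ℕ → ℕ} {i b c : ℕ} (hmin : ∀ l < i, m l = 0) (hc : c ≤ i) :
    ∑ l ∈ Icc c b, m l = ∑ l ∈ Icc i b, m l :=
  (Finset.sum_subset (Icc_subset_Icc_left hc) fun l hl hl' => hmin l (by simp at hl hl'; omega)).symm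

theorem inS_indicator_of_minSet {n i : ℕ} {s t : ℕ × ℕ → ℕ}
    (ht1 : ∀ a ∈ MinSet n i s, t a = 1) (ht0 : ∀ a ∉ MinSet n i s, t a = 0) :
    InS n (fun l => if l = i then 1 else 0) t := by
  refine inS_iff.mpr ⟨fun p q hpq => ht0 _ fun h => hpq h.1.1, fun a b L hL => ?_⟩
  rw [Finset.sum_ite_eq']
  split_ifs with hi
  · refine List.sum_map_le_one_of_isAntichain hL.pairwise_lt isAntichain_minSet (fun x => ?_) ht0
    by_cases hx : x ∈ MinSet n i s
    exacts [(ht1 x hx).le, (ht0 x hx).trans_le zero_le_one]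
  · refine (List.sum_eq_zero ?_).le
    simp only [List.mem_map]
    rintro _ ⟨x, hx, rfl⟩
    refine ht0 x fun hxM => hi (Finset.mem_Icc.mpr ⟨?_, ?_⟩)
    · exact (hL.left_le hx).1.trans hxM.1.2.1
    · exact hxM.1.2.2.1.trans (hL.le_right hx).2

namespace InS

variable {n i : ℕ} {m : ℕ → ℕ} {s t : ℕ × ℕ → ℕ}

theorem sum_lt_of_forall_notMem_minSet {a b : ℕ} {L : List (ℕ × ℕ)} (hs : InS n m s)
    (hmi : m i ≠ 0) (hmin : ∀ l < i, m l = 0) (hL : IsRootPath n (a, a) (b, b) L)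
    (hai : a ≤ i) (hib : i ≤ b) (hLM : ∀ x ∈ L, x ∉ MinSet n i s) :
    (L.map s).sum < ∑ l ∈ Icc a b, m l := by
  have hiab : i ∈ Icc a b := Finset.mem_Icc.mpr ⟨hai, hib⟩
  by_cases hz : ∀ x ∈ L, s x = 0
  · rw [List.sum_eq_zero (List.forall_mem_map.mpr hz)]
    exact (Nat.pos_of_ne_zero hmi).trans_le (Finset.single_le_sum (by simp) hiab)
  push Not at hz
  obtain ⟨A, r, B, rfl, hr, hA⟩ : ∃ A r B, L = A ++ r :: B ∧ s r ≠ 0 ∧ ∀ x ∈ A, s x = 0 := by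
    obtain ⟨r, hfind⟩ := Option.isSome_iff_exists.mp <|
      (List.find?_isSome (p := fun x => s x ≠ 0)).mpr (by simpa using hz)
    obtain ⟨hr, A, B, hL, hA⟩ := List.find?_eq_some_iff_append.mp hfind
    exact ⟨A, r, B, hL, by simpa using hr, by simpa using hA⟩
  have hrB := hL.of_append_cons
  have hsum : ((A ++ r :: B).map s).sum = ((r :: B).map s).sum := by
    rw [List.map_append, List.sum_append, List.sum_eq_zero (List.forall_mem_map.mpr hA), zero_add]
  rw [hsum]
  have hir : i ≤ r.2 := by
    by_contra h
    exact hr (hs.apply_eq_zero_of_lt hmin (not_le.mp h))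
  by_cases hri : r.1 ≤ i
  · obtain ⟨r', hr'M, hr'r⟩ := exists_mem_minSet_lt ⟨hrB.isRoot_left, hri, hir, hr⟩
      (hLM r (by simp))
    have hbound := hs.add_sum_le hr'M.1.1 hr'r hrB
    dsimp only at hbound
    rw [sum_Icc_eq_of_forall_lt hmin (hr'M.1.2.1), ← sum_Icc_eq_of_forall_lt hmin hai] at hbound
    have hr' := hr'M.1.2.2.2
    omega
  · calc ((r :: B).map s).sum ≤ ∑ l ∈ Icc r.1 b, m l := hs.sum_le hrB
      _ < ∑ l ∈ Icc a b, m l :=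
        Finset.sum_lt_sum_of_subset (Icc_subset_Icc (by omega) le_rfl) hiab (by simp; omega)
          (Nat.pos_of_ne_zero hmi) (by simp)

theorem sub_indicator_of_minSet (hs : InS n m s) (hmi : m i ≠ 0) (hmin : ∀ l < i, m l = 0)
    (ht1 : ∀ a ∈ MinSet n i s, t a = 1) (ht0 : ∀ a ∉ MinSet n i s, t a = 0) :
    InS n (fun l => m l - if l = i then 1 else 0) (fun a => s a - t a) := by
  refine inS_iff.mpr ⟨fun p q hpq => by simp [hs.1 p q hpq], fun a b L hL => ?_⟩
  have hsL := (inS_iff.mp hs).2 a b L hL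
  have hle : ∀ l ∈ Icc a b, (if l = i then 1 else 0) ≤ m l := by
    rintro l -
    split_ifs with h <;> simp [h, Nat.one_le_iff_ne_zero, hmi]
  rw [Finset.sum_tsub_distrib _ hle, Finset.sum_ite_eq']
  by_cases hLM : ∃ x ∈ L, x ∈ MinSet n i s
  · obtain ⟨x, hxL, hxM⟩ := hLM
    have hlt : (L.map fun a => s a - t a).sum < (L.map s).sum :=
      List.sum_lt_sum _ _ (fun _ _ => Nat.sub_le _ _)
        ⟨x, hxL, by rw [ht1 x hxM]; have := hxM.1.2.2.2; omega⟩
    split_ifs <;> omega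
  · push Not at hLM
    rw [List.map_congr_left fun x hx => by rw [ht0 x (hLM x hx), Nat.sub_zero]]
    split_ifs with hi
    · have := hs.sum_lt_of_forall_notMem_minSet hmi hmin hL (Finset.mem_Icc.mp hi).1
        (Finset.mem_Icc.mp hi).2 hLM
      omega
    · exact hsL

end InS

theorem split_off_minset_general (n i : ℕ) (m : ℕ → ℕ) (s t : ℕ × ℕ → ℕ)
    (hmi : m i ≠ 0) (hmin : ∀ l, l < i → m l = 0)
    (hs : InS n m s)
    (ht1 : ∀ a ∈ MinSet n i s, t a = 1) (ht0 : ∀ a ∉ MinSet n i s, t a = 0) :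
    InS n (fun l => if l = i then 1 else 0) t ∧
    InS n (fun l => m l - (if l = i then 1 else 0)) (fun a => s a - t a) :=
  ⟨inS_indicator_of_minSet ht1 ht0, hs.sub_indicator_of_minSet hmi hmin ht1 ht0⟩

/-- Splitting off the minimal set: let `λ = Σ_j m_j ω_j`
with `i` minimal such that `m_i ≠ 0`.  For `s ∈ S(λ)`, the 0-1 tuple
`t = m_i^s` supported on the minimal set `M_i^s` satisfies `t ∈ S(ω_i)`
and `s - t ∈ S(λ - ω_i)`. -/
theorem split_off_minset (n i : ℕ) (m : ℕ → ℕ) (s t : ℕ × ℕ → ℕ)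
    (hi : 1 ≤ i) (hin : i ≤ n) (hmi : m i ≠ 0) (hmin : ∀ l, l < i → m l = 0)
    (hs : InS n m s)
    (ht1 : ∀ a ∈ MinSet n i s, t a = 1) (ht0 : ∀ a ∉ MinSet n i s, t a = 0) :
    InS n (fun l => if l = i then 1 else 0) t ∧
    InS n (fun l => m l - (if l = i then 1 else 0)) (fun a => s a - t a) :=
  split_off_minset_general n i m s t hmi hmin hs ht1 ht0
end
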